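/- arXiv:2505.14606 — 2 statements merged into one kernel-verified Lean document; each statement's English description precedes it below -/
import Mathlib

section
/- Fix φ ∈ ℝⁿ. The vector ρ*(φ) = Lφ − t*(φ)·φ, where t*(φ) = (a + ½⟨φ, Lφ⟩)/(2β + ½‖φ‖²), is the unique global minimizer of the map ρ ↦ 𝓛(φ, ρ) over ℝⁿ; that is, 𝓛(φ, ρ*(φ)) ≤ 𝓛(φ, ρ) for all ρ ∈ ℝⁿ, with strict inequality whenever ρ ≠ ρ*(φ). -/
open scoped RealInnerProductSpace

/-- The loss 𝓛(φ, ρ) = β‖Lφ − ρ‖² + (a + ½⟨φ, ρ⟩)². -/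
noncomputable def loss {n : ℕ} (L : Matrix (Fin n) (Fin n) ℝ) (β a : ℝ)
    (φ ρ : EuclideanSpace ℝ (Fin n)) : ℝ :=
  β * ‖Matrix.toEuclideanLin L φ - ρ‖ ^ 2 + (a + (1 / 2) * ⟪φ, ρ⟫) ^ 2

/-!
The map ρ ↦ β‖w − ρ‖² + (a + c⟪φ, ρ⟫)² is a quadratic polynomial in ρ. At a critical point ρ₀,
i.e. where β (w − ρ₀) = c (a + c⟪φ, ρ₀⟫) φ, its linear part in ρ − ρ₀ cancels, so it exceeds its
value at ρ₀ by β‖ρ − ρ₀‖² + c²⟪φ, ρ − ρ₀⟫², which is positive for ρ ≠ ρ₀ when β > 0.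
The vector Lφ − t*(φ) φ is such a critical point for c = ½.
-/

section QuadraticLoss

variable {E : Type*} [NormedAddCommGroup E] [InnerProductSpace ℝ E]

theorem quadratic_loss_eq_add_of_critical {β a c : ℝ} {w φ ρ₀ : E}
    (hcrit : β • (w - ρ₀) = (c * (a + c * ⟪φ, ρ₀⟫)) • φ) (ρ : E) :
    β * ‖w - ρ‖ ^ 2 + (a + c * ⟪φ, ρ⟫) ^ 2 =
      β * ‖w - ρ₀‖ ^ 2 + (a + c * ⟪φ, ρ₀⟫) ^ 2 +
        (β * ‖ρ - ρ₀‖ ^ 2 + (c * ⟪φ, ρ - ρ₀⟫) ^ 2) := by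
  have hcross : β * ⟪w - ρ₀, ρ - ρ₀⟫ = c * (a + c * ⟪φ, ρ₀⟫) * ⟪φ, ρ - ρ₀⟫ := by
    rw [← real_inner_smul_left, hcrit, real_inner_smul_left]
  have hw : w - ρ = (w - ρ₀) - (ρ - ρ₀) := by abel
  have hρ : ⟪φ, ρ⟫ = ⟪φ, ρ₀⟫ + ⟪φ, ρ - ρ₀⟫ := by rw [inner_sub_right]; ring
  rw [hw, hρ, norm_sub_sq_real]
  linear_combination (-2 : ℝ) * hcross

theorem critical_sub_smul_of_mul_eq {β a t : ℝ} {w φ : E}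
    (ht : t * (2 * β + 1 / 2 * ‖φ‖ ^ 2) = a + 1 / 2 * ⟪φ, w⟫) :
    β • (w - (w - t • φ)) = (1 / 2 * (a + 1 / 2 * ⟪φ, w - t • φ⟫)) • φ := by
  rw [sub_sub_cancel, smul_smul, inner_sub_right, real_inner_smul_right,
    real_inner_self_eq_norm_sq]
  congr 1
  linear_combination (1 / 2 : ℝ) * ht

end QuadraticLoss

theorem inner_minimizer_general {n : ℕ} (L : Matrix (Fin n) (Fin n) ℝ)
    (β a : ℝ) (hβ : 0 < β) (φ : EuclideanSpace ℝ (Fin n)) :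
    (∀ ρ : EuclideanSpace ℝ (Fin n),
        loss L β a φ
          (Matrix.toEuclideanLin L φ -
            ((a + (1 / 2) * ⟪φ, Matrix.toEuclideanLin L φ⟫) /
              (2 * β + (1 / 2) * ‖φ‖ ^ 2)) • φ) ≤ loss L β a φ ρ) ∧
    (∀ ρ : EuclideanSpace ℝ (Fin n),
        ρ ≠ Matrix.toEuclideanLin L φ -
            ((a + (1 / 2) * ⟪φ, Matrix.toEuclideanLin L φ⟫) /
              (2 * β + (1 / 2) * ‖φ‖ ^ 2)) • φ →
        loss L β a φ
          (Matrix.toEuclideanLin L φ -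
            ((a + (1 / 2) * ⟪φ, Matrix.toEuclideanLin L φ⟫) /
              (2 * β + (1 / 2) * ‖φ‖ ^ 2)) • φ) < loss L β a φ ρ) := by
  set w := Matrix.toEuclideanLin L φ
  have hcrit := critical_sub_smul_of_mul_eq (div_mul_cancel₀ (a + 1 / 2 * ⟪φ, w⟫)
    (by positivity : 2 * β + 1 / 2 * ‖φ‖ ^ 2 ≠ 0))
  set ρ₀ := w - ((a + 1 / 2 * ⟪φ, w⟫) / (2 * β + 1 / 2 * ‖φ‖ ^ 2)) • φ
  have hexpand (ρ) : loss L β a φ ρ =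
      loss L β a φ ρ₀ + (β * ‖ρ - ρ₀‖ ^ 2 + (1 / 2 * ⟪φ, ρ - ρ₀⟫) ^ 2) :=
    quadratic_loss_eq_add_of_critical hcrit ρ
  refine ⟨fun ρ ↦ ?_, fun ρ hne ↦ ?_⟩
  · rw [hexpand ρ]
    exact le_add_of_nonneg_right (by positivity)
  · rw [hexpand ρ]
    have hdist : 0 < ‖ρ - ρ₀‖ := norm_sub_pos_iff.mpr hne
    exact lt_add_of_pos_right _ (by positivity)

/-- ρ*(φ) = Lφ − t*(φ)·φ is the unique global minimizer of ρ ↦ 𝓛(φ, ρ). -/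
theorem inner_minimizer {n : ℕ} (hn : 0 < n) (L : Matrix (Fin n) (Fin n) ℝ)
    (hL : L.IsSymm) (β a : ℝ) (hβ : 0 < β) (φ : EuclideanSpace ℝ (Fin n)) :
    (∀ ρ : EuclideanSpace ℝ (Fin n),
        loss L β a φ
          (Matrix.toEuclideanLin L φ -
            ((a + (1 / 2) * ⟪φ, Matrix.toEuclideanLin L φ⟫) /
              (2 * β + (1 / 2) * ‖φ‖ ^ 2)) • φ) ≤ loss L β a φ ρ) ∧
    (∀ ρ : EuclideanSpace ℝ (Fin n),
        ρ ≠ Matrix.toEuclideanLin L φ -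
            ((a + (1 / 2) * ⟪φ, Matrix.toEuclideanLin L φ⟫) /
              (2 * β + (1 / 2) * ‖φ‖ ^ 2)) • φ →
        loss L β a φ
          (Matrix.toEuclideanLin L φ -
            ((a + (1 / 2) * ⟪φ, Matrix.toEuclideanLin L φ⟫) /
              (2 * β + (1 / 2) * ‖φ‖ ^ 2)) • φ) < loss L β a φ ρ) :=
  inner_minimizer_general L β a hβ φ
end

section
/- Fix φ ∈ ℝⁿ and set A(φ) = a + ½⟨φ, Lφ⟩ and ρ*(φ) = Lφ − t*(φ)·φ with t*(φ) = A(φ)/(2β + ½‖φ‖²). Then 𝓛(φ, ρ*(φ)) = A(φ)² · 4β/(4β + ‖φ‖²); in particular 𝓛(φ, ρ*(φ)) ≤ A(φ)², with equality if and only if A(φ) = 0 or φ = 0. -/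
open scoped RealInnerProductSpace

/-!
Along the line ρ = Lφ − t·φ the loss is the quadratic β t² s + (A − t s/2)² in t, where
s = ‖φ‖². Its minimizer is t* = A/(2β + s/2), with minimum A² · 4β/(4β + s), and the factor
4β/(4β + s) lies in (0, 1], equal to 1 exactly when s = 0.
-/

theorem loss_sub_smul {n : ℕ} (L : Matrix (Fin n) (Fin n) ℝ) (β a t : ℝ)
    (φ : EuclideanSpace ℝ (Fin n)) :
    loss L β a φ (Matrix.toEuclideanLin L φ - t • φ) =
      β * (t ^ 2 * ‖φ‖ ^ 2) +
        (a + (1 / 2) * ⟪φ, Matrix.toEuclideanLin L φ⟫ - t * ‖φ‖ ^ 2 / 2) ^ 2 := by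
  rw [loss, sub_sub_cancel, norm_smul, mul_pow, Real.norm_eq_abs, sq_abs, inner_sub_right,
    real_inner_smul_right, real_inner_self_eq_norm_sq]
  ring

theorem quadratic_at_minimizer {β A s : ℝ} (h : 4 * β + s ≠ 0) :
    β * ((A / (2 * β + (1 / 2) * s)) ^ 2 * s) + (A - A / (2 * β + (1 / 2) * s) * s / 2) ^ 2 =
      A ^ 2 * (4 * β / (4 * β + s)) := by
  -- `field_simp` cannot clear `2 * β + 1 / 2 * s` against `4 * β + s`; make the denominator an atom.
  obtain ⟨D, rfl⟩ : ∃ D, s = D - 4 * β := ⟨4 * β + s, by ring⟩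
  rw [show 2 * β + 1 / 2 * (D - 4 * β) = D / 2 by ring, add_sub_cancel] at *
  field_simp
  ring

theorem sq_mul_div_add_le_sq {β A s : ℝ} (hβ : 0 ≤ β) (hs : 0 ≤ s) :
    A ^ 2 * (4 * β / (4 * β + s)) ≤ A ^ 2 :=
  mul_le_of_le_one_right (sq_nonneg A) (div_le_one_of_le₀ (by linarith) (by positivity))

theorem sq_mul_div_add_eq_sq_iff {β A s : ℝ} (hβ : 0 < β) (hs : 0 ≤ s) :
    A ^ 2 * (4 * β / (4 * β + s)) = A ^ 2 ↔ A = 0 ∨ s = 0 := by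
  rcases eq_or_ne A 0 with hA | hA
  · simp [hA]
  rw [mul_eq_left₀ (pow_ne_zero 2 hA), div_eq_one_iff_eq (by positivity)]
  simp [hA]

theorem reduced_objective_general {n : ℕ} (L : Matrix (Fin n) (Fin n) ℝ)
    (β a : ℝ) (hβ : 0 < β) (φ : EuclideanSpace ℝ (Fin n)) :
    loss L β a φ
        (Matrix.toEuclideanLin L φ -
          ((a + (1 / 2) * ⟪φ, Matrix.toEuclideanLin L φ⟫) /
            (2 * β + (1 / 2) * ‖φ‖ ^ 2)) • φ)
      = (a + (1 / 2) * ⟪φ, Matrix.toEuclideanLin L φ⟫) ^ 2 *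
          (4 * β / (4 * β + ‖φ‖ ^ 2)) ∧
    loss L β a φ
        (Matrix.toEuclideanLin L φ -
          ((a + (1 / 2) * ⟪φ, Matrix.toEuclideanLin L φ⟫) /
            (2 * β + (1 / 2) * ‖φ‖ ^ 2)) • φ)
      ≤ (a + (1 / 2) * ⟪φ, Matrix.toEuclideanLin L φ⟫) ^ 2 ∧
    (loss L β a φ
        (Matrix.toEuclideanLin L φ -
          ((a + (1 / 2) * ⟪φ, Matrix.toEuclideanLin L φ⟫) /
            (2 * β + (1 / 2) * ‖φ‖ ^ 2)) • φ)
      = (a + (1 / 2) * ⟪φ, Matrix.toEuclideanLin L φ⟫) ^ 2 ↔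
        a + (1 / 2) * ⟪φ, Matrix.toEuclideanLin L φ⟫ = 0 ∨ φ = 0) := by
  have hs : 0 ≤ ‖φ‖ ^ 2 := by positivity
  rw [loss_sub_smul, quadratic_at_minimizer (by positivity)]
  refine ⟨rfl, sq_mul_div_add_le_sq hβ.le hs, ?_⟩
  rw [sq_mul_div_add_eq_sq_iff hβ hs, pow_eq_zero_iff two_ne_zero, norm_eq_zero]

/-- The reduced objective: 𝓛(φ, ρ*(φ)) = A(φ)²·4β/(4β + ‖φ‖²) ≤ A(φ)²,
with equality iff A(φ) = 0 or φ = 0. -/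
theorem reduced_objective {n : ℕ} (hn : 0 < n) (L : Matrix (Fin n) (Fin n) ℝ)
    (hL : L.IsSymm) (β a : ℝ) (hβ : 0 < β) (φ : EuclideanSpace ℝ (Fin n)) :
    loss L β a φ
        (Matrix.toEuclideanLin L φ -
          ((a + (1 / 2) * ⟪φ, Matrix.toEuclideanLin L φ⟫) /
            (2 * β + (1 / 2) * ‖φ‖ ^ 2)) • φ)
      = (a + (1 / 2) * ⟪φ, Matrix.toEuclideanLin L φ⟫) ^ 2 *
          (4 * β / (4 * β + ‖φ‖ ^ 2)) ∧
    loss L β a φ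
        (Matrix.toEuclideanLin L φ -
          ((a + (1 / 2) * ⟪φ, Matrix.toEuclideanLin L φ⟫) /
            (2 * β + (1 / 2) * ‖φ‖ ^ 2)) • φ)
      ≤ (a + (1 / 2) * ⟪φ, Matrix.toEuclideanLin L φ⟫) ^ 2 ∧
    (loss L β a φ
        (Matrix.toEuclideanLin L φ -
          ((a + (1 / 2) * ⟪φ, Matrix.toEuclideanLin L φ⟫) /
            (2 * β + (1 / 2) * ‖φ‖ ^ 2)) • φ)
      = (a + (1 / 2) * ⟪φ, Matrix.toEuclideanLin L φ⟫) ^ 2 ↔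
        a + (1 / 2) * ⟪φ, Matrix.toEuclideanLin L φ⟫ = 0 ∨ φ = 0) :=
  reduced_objective_general L β a hβ φ
end
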